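/- arXiv:2105.14570 — 2 statements merged into one kernel-verified Lean document; each statement's English description precedes it below -/
import Mathlib

section
/- Let v be a positive harmonic function on the open upper half-plane ℍ that extends continuously to an open interval γ ⊆ ℝ with v = 0 on γ. Then for every x ∈ γ, the boundary normal derivative ∂v/∂y(x, 0) of the harmonic reflection v* exists and is strictly positive, where v* is the odd extension v*(x, y) = v(x, y) for y > 0, v*(x, 0) = 0, v*(x, y) = -v(x, -y) for y < 0, which is harmonic on ℍ ∪ γ ∪ ℍ⁻. -/
open Complex Metric Set Filter Topology

local notation "conj'" => starRingEnd ℂ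

/-- Harmonicity on a set via continuity and the circle mean value property. -/
def HarmonicOnSet (u : ℂ → ℝ) (s : Set ℂ) : Prop :=
  ContinuousOn u s ∧ ∀ z ∈ s, ∀ ρ > (0 : ℝ), Metric.closedBall z ρ ⊆ s →
    u z = (2 * Real.pi)⁻¹ *
      ∫ t in (0 : ℝ)..(2 * Real.pi), u (z + (ρ : ℂ) * Complex.exp ((t : ℂ) * Complex.I))

/-- The open upper half-plane. -/
def UHP : Set ℂ := {z : ℂ | 0 < z.im}

/-- The open lower half-plane. -/
def LHP : Set ℂ := {z : ℂ | z.im < 0}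

/-- Odd (Schwarz) reflection of a function vanishing on an interval of `ℝ`. -/
noncomputable def oddReflection (v : ℂ → ℝ) (z : ℂ) : ℝ :=
  if 0 < z.im then v z else if z.im < 0 then -v (conj' z) else 0

/-!
The odd reflection `v*` has the mean value property on all small circles: a circle centred on
`ℝ` is symmetric under `conj`, which flips the sign of `v*`, and a circle in `ℍ⁻` is the mirror
image of one in `ℍ`. Since `v = 0` on `γ`, `v*` is also continuous on `ℍ ∪ γ ∪ ℍ⁻`. By the
maximum principle, a continuous function with the local mean value property coincides on each
disc `B(c, R)` with the Poisson integral of its boundary values, which is the real part of the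
holomorphic Herglotz integral `g`. This gives the full mean value property, and at a point
`x ∈ γ` it gives `∂v*/∂y (x) = re (i g'(x)) = 2 / R² · avg_{|ζ - x| = R} (Im ζ · v*(ζ))`. That
average is positive because `Im ζ · v*(ζ) ≥ 0` everywhere and `> 0` at `x + iR`.
-/

open Real

section CircleAverage

variable {c : ℂ} {R : ℝ}

theorem circleAverage_lt_circleAverage {f g : ℂ → ℝ} (hR : 0 < R)
    (hf : ContinuousOn f (sphere c R)) (hg : ContinuousOn g (sphere c R))
    (hle : ∀ ζ ∈ sphere c R, f ζ ≤ g ζ) (hlt : ∃ ζ ∈ sphere c R, f ζ < g ζ) :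
    circleAverage f c R < circleAverage g c R := by
  obtain ⟨ζ, hζ, hfg⟩ := hlt
  rw [← abs_of_pos hR, ← image_circleMap_Ioc] at hζ
  obtain ⟨θ, hθ, rfl⟩ := hζ
  have hmaps : ∀ t, circleMap c R t ∈ sphere c R := circleMap_mem_sphere c hR.le
  simp only [circleAverage_def, smul_eq_mul]
  refine mul_lt_mul_of_pos_left ?_ (inv_pos.2 two_pi_pos)
  exact intervalIntegral.integral_lt_integral_of_continuousOn_of_le_of_exists_lt two_pi_pos
    (hf.comp_continuous (continuous_circleMap c R) hmaps).continuousOn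
    (hg.comp_continuous (continuous_circleMap c R) hmaps).continuousOn
    (fun t _ => hle _ (hmaps t)) ⟨θ, Ioc_subset_Icc_self hθ, hfg⟩

theorem circleAverage_comp_conj {E : Type*} [NormedAddCommGroup E] [NormedSpace ℝ E]
    (f : ℂ → E) (z : ℂ) (R : ℝ) :
    circleAverage (fun ζ => f (conj' ζ)) z R = circleAverage f (conj' z) R := by
  have h : ∀ θ, conj' (circleMap z R θ) = circleMap (conj' z) R (2 * π - θ) := fun θ => by
    rw [conj_circleMap, (periodic_circleMap _ _).sub_eq']
  simp only [circleAverage_def, h]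
  rw [intervalIntegral.integral_comp_sub_left (fun θ => f (circleMap (conj' z) R θ))]
  simp

end CircleAverage

theorem eventually_nhdsGT_zero_closedBall_subset {α : Type*} [PseudoMetricSpace α] {s : Set α}
    {z : α} (hs : s ∈ 𝓝 z) : ∀ᶠ r in 𝓝[>] (0 : ℝ), closedBall z r ⊆ s :=
  (eventually_closedBall_subset hs).filter_mono nhdsWithin_le_nhds

def HasLocalMeanValueOn (u : ℂ → ℝ) (s : Set ℂ) : Prop :=
  ∀ z ∈ s, ∀ᶠ r in 𝓝[>] (0 : ℝ), circleAverage u z r = u z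

section LocalMeanValue

variable {u v : ℂ → ℝ} {s : Set ℂ} {c : ℂ} {R : ℝ}

theorem HasLocalMeanValueOn.mono {t : Set ℂ} (hu : HasLocalMeanValueOn u s) (hts : t ⊆ s) :
    HasLocalMeanValueOn u t :=
  fun z hz => hu z (hts hz)

theorem HasLocalMeanValueOn.sub (hs : IsOpen s) (hu : HasLocalMeanValueOn u s)
    (hv : HasLocalMeanValueOn v s) (hcu : ContinuousOn u s) (hcv : ContinuousOn v s) :
    HasLocalMeanValueOn (u - v) s := by
  intro z hz
  filter_upwards [hu z hz, hv z hz, eventually_nhdsGT_zero_closedBall_subset (hs.mem_nhds hz),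
    self_mem_nhdsWithin] with r hur hvr hrs (hr : 0 < r)
  have hsph : sphere z r ⊆ s := sphere_subset_closedBall.trans hrs
  rw [Pi.sub_apply, ← hur, ← hvr]
  exact circleAverage_sub ((hcu.mono hsph).circleIntegrable hr.le)
    ((hcv.mono hsph).circleIntegrable hr.le)

theorem dist_circleMap_arg_sub (z c : ℂ) {r : ℝ} (hr : 0 ≤ r) :
    dist (circleMap z r (arg (z - c))) c = dist z c + r := by
  rw [dist_eq_norm, circleMap, add_sub_right_comm]
  nth_rw 1 [← norm_mul_exp_arg_mul_I (z - c)]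
  rw [← add_mul, ← ofReal_add, norm_mul, norm_exp_ofReal_mul_I, mul_one, norm_real,
    Real.norm_eq_abs, abs_of_nonneg (by positivity), dist_eq_norm]

/-- Among the maximisers of `u` on the closed disc take one farthest from the centre: it cannot be
interior, since on a small circle around it `u` is strictly smaller at the point farthest from
the centre. -/
theorem HasLocalMeanValueOn.le_of_forall_mem_sphere_le {M : ℝ}
    (hmv : HasLocalMeanValueOn u (ball c R)) (hu : ContinuousOn u (closedBall c R))
    (hM : ∀ ζ ∈ sphere c R, u ζ ≤ M) : ∀ z ∈ closedBall c R, u z ≤ M := by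
  intro z hz
  obtain ⟨z₀, hz₀, hmax⟩ := (isCompact_closedBall c R).exists_isMaxOn ⟨z, hz⟩ hu
  have hK : IsCompact (closedBall c R ∩ u ⁻¹' {u z₀}) :=
    (isCompact_closedBall c R).of_isClosed_subset
      (hu.preimage_isClosed_of_isClosed isClosed_closedBall isClosed_singleton)
      inter_subset_left
  obtain ⟨z₁, ⟨hz₁, hu₁ : u z₁ = u z₀⟩, hfar⟩ :=
    hK.exists_isMaxOn (f := fun ζ => dist ζ c) ⟨z₀, hz₀, rfl⟩ (by fun_prop)
  suffices hsph : z₁ ∈ sphere c R by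
    calc u z ≤ u z₀ := hmax hz
      _ = u z₁ := hu₁.symm
      _ ≤ M := hM z₁ hsph
  by_contra hnot
  have hball : z₁ ∈ ball c R := by
    rw [← ball_union_sphere] at hz₁
    exact hz₁.resolve_right hnot
  obtain ⟨r, hmvr, hrR, hr⟩ := ((hmv z₁ hball).and <|
    (eventually_nhdsGT_zero_closedBall_subset (isOpen_ball.mem_nhds hball)).and
      self_mem_nhdsWithin).exists
  set p := circleMap z₁ r (arg (z₁ - c))
  have hsph : sphere z₁ r ⊆ closedBall c R :=
    sphere_subset_closedBall.trans (hrR.trans ball_subset_closedBall)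
  have hp : p ∈ sphere z₁ r := circleMap_mem_sphere z₁ hr.le _
  have hup : u p < u z₀ := by
    refine (hmax (hsph hp)).lt_of_ne fun hpz => ?_
    have := hfar ⟨hsph hp, hpz⟩
    simp only [mem_ofPred_eq, p, dist_circleMap_arg_sub z₁ c hr.le] at this
    linarith
  have := circleAverage_lt_circleAverage (g := fun _ => u z₀) hr (hu.mono hsph) continuousOn_const
    (fun ζ hζ => hmax (hsph hζ)) ⟨p, hp, hup⟩
  rw [hmvr, circleAverage_const, hu₁] at this
  exact lt_irrefl _ this

theorem HasLocalMeanValueOn.eqOn_of_eqOn_sphere (hu : HasLocalMeanValueOn u (ball c R))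
    (hv : HasLocalMeanValueOn v (ball c R)) (hcu : ContinuousOn u (closedBall c R))
    (hcv : ContinuousOn v (closedBall c R)) (huv : EqOn u v (sphere c R)) :
    EqOn u v (closedBall c R) := by
  have hle {f g : ℂ → ℝ} (hf : HasLocalMeanValueOn f (ball c R))
      (hg : HasLocalMeanValueOn g (ball c R)) (hcf : ContinuousOn f (closedBall c R))
      (hcg : ContinuousOn g (closedBall c R)) (hfg : EqOn f g (sphere c R)) :
      ∀ z ∈ closedBall c R, f z - g z ≤ 0 :=
    (hf.sub isOpen_ball hg (hcf.mono ball_subset_closedBall)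
      (hcg.mono ball_subset_closedBall)).le_of_forall_mem_sphere_le (hcf.sub hcg)
      fun ζ hζ => by simp [hfg hζ]
  intro z hz
  linarith [hle hu hv hcu hcv huv z hz, hle hv hu hcv hcu huv.symm z hz]

end LocalMeanValue

noncomputable def herglotzIntegral (u : ℂ → ℝ) (c : ℂ) (R : ℝ) (w : ℂ) : ℂ :=
  circleAverage (fun ζ => herglotzRieszKernel c w ζ • (u ζ : ℂ)) c R

noncomputable def poissonIntegral (u : ℂ → ℝ) (c : ℂ) (R : ℝ) (w : ℂ) : ℝ :=
  circleAverage (fun ζ => poissonKernel c w ζ * u ζ) c R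

section PoissonIntegral

variable {u : ℂ → ℝ} {c w : ℂ} {R : ℝ}

theorem continuousOn_poissonKernel_sphere (hw : w ∈ ball c R) :
    ContinuousOn (poissonKernel c w) (sphere c |R|) := by
  rw [poissonKernel_eq_re_herglotzRieszKernel]
  exact continuous_re.comp_continuousOn (continuousOn_herglotzRieszKernel_sphere hw)

theorem sq_norm_sub_le_sq_of_mem_ball (hw : w ∈ ball c R) : ‖w - c‖ ^ 2 ≤ R ^ 2 :=
  pow_le_pow_left₀ (norm_nonneg _) (mem_ball_iff_norm.1 hw).le 2

theorem poissonKernel_nonneg (hw : w ∈ ball c R) {ζ : ℂ} (hζ : ζ ∈ sphere c R) :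
    0 ≤ poissonKernel c w ζ := by
  rw [poissonKernel_def, mem_sphere_iff_norm.1 hζ]
  exact div_nonneg (sub_nonneg.2 (sq_norm_sub_le_sq_of_mem_ball hw)) (sq_nonneg _)

theorem herglotzIntegral_eq_circleAverage_zero (u : ℂ → ℝ) (c : ℂ) (R : ℝ) (w : ℂ) :
    herglotzIntegral u c R w =
      circleAverage (fun ζ => herglotzRieszKernel 0 (w - c) ζ • (u (ζ + c) : ℂ)) 0 R := by
  rw [herglotzIntegral, ← circleAverage_map_add_const]
  simp only [herglotzRieszKernel_add_const]

theorem ContinuousOn.ofReal_comp_add_sphere_zero (hu : ContinuousOn u (sphere c R)) :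
    ContinuousOn (fun ζ => (u (ζ + c) : ℂ)) (sphere 0 R) :=
  continuous_ofReal.comp_continuousOn (hu.comp (by fun_prop) fun ζ hζ => by simpa using hζ)

theorem hasDerivAt_herglotzIntegral (hR : 0 < R) (hu : ContinuousOn u (sphere c R))
    (hw : w ∈ ball c R) :
    HasDerivAt (herglotzIntegral u c R)
      (circleAverage (fun ζ => (2 * ζ / (ζ - (w - c)) ^ 2) • (u (ζ + c) : ℂ)) 0 R) w := by
  have hint : CircleIntegrable (fun ζ => (u (ζ + c) : ℂ)) 0 R :=
    hu.ofReal_comp_add_sphere_zero.circleIntegrable hR.le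
  have hwc : w - c ∈ ball 0 R := by simpa [dist_eq_norm] using hw
  rw [funext (herglotzIntegral_eq_circleAverage_zero u c R)]
  exact (hasDerivAt_circleAverage_herglotzRieszKernel_smul hint hwc).comp_sub_const w c

theorem differentiableOn_herglotzIntegral (hR : 0 < R) (hu : ContinuousOn u (sphere c R)) :
    DifferentiableOn ℂ (herglotzIntegral u c R) (ball c R) :=
  fun _ hw => (hasDerivAt_herglotzIntegral hR hu hw).differentiableAt.differentiableWithinAt

theorem re_herglotzIntegral (hR : 0 < R) (hu : ContinuousOn u (sphere c R)) (hw : w ∈ ball c R) :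
    (herglotzIntegral u c R w).re = poissonIntegral u c R w := by
  have hint : CircleIntegrable (fun ζ => herglotzRieszKernel c w ζ • (u ζ : ℂ)) c R := by
    refine ContinuousOn.circleIntegrable hR.le ?_
    have := continuousOn_herglotzRieszKernel_sphere hw
    rw [abs_of_pos hR] at this
    exact this.smul (continuous_ofReal.comp_continuousOn hu)
  rw [herglotzIntegral, ← reCLM_apply, ← reCLM.circleAverage_comp_comm hint, poissonIntegral,
    poissonKernel_eq_re_herglotzRieszKernel]
  congr 1
  ext ζ
  simp

theorem continuousOn_poissonIntegral (hR : 0 < R) (hu : ContinuousOn u (sphere c R)) :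
    ContinuousOn (poissonIntegral u c R) (ball c R) :=
  (continuous_re.comp_continuousOn (differentiableOn_herglotzIntegral hR hu).continuousOn).congr
    fun _ hw => (re_herglotzIntegral hR hu hw).symm

theorem circleAverage_poissonIntegral (hR : 0 < R) (hu : ContinuousOn u (sphere c R)) {z : ℂ}
    {ρ : ℝ} (hρ : 0 < ρ) (hz : closedBall z ρ ⊆ ball c R) :
    circleAverage (poissonIntegral u c R) z ρ = poissonIntegral u c R z := by
  have hg := differentiableOn_herglotzIntegral hR hu
  have hsph : sphere z ρ ⊆ ball c R := sphere_subset_closedBall.trans hz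
  have hint : CircleIntegrable (herglotzIntegral u c R) z ρ :=
    (hg.continuousOn.mono hsph).circleIntegrable hρ.le
  have hmean : circleAverage (herglotzIntegral u c R) z ρ = herglotzIntegral u c R z :=
    (hg.diffContOnCl_ball (by rwa [abs_of_pos hρ])).circleAverage
  rw [← re_herglotzIntegral hR hu (hz (mem_closedBall_self hρ.le)), ← hmean, ← reCLM_apply,
    ← reCLM.circleAverage_comp_comm hint]
  refine circleAverage_congr_sphere fun ζ hζ => ?_
  rw [abs_of_pos hρ] at hζ
  exact (re_herglotzIntegral hR hu (hsph hζ)).symm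

theorem poissonIntegral_center (hR : R ≠ 0) (u : ℂ → ℝ) (c : ℂ) :
    poissonIntegral u c R c = circleAverage u c R := by
  refine circleAverage_congr_sphere fun ζ hζ => ?_
  have : ‖ζ - c‖ ≠ 0 := by
    rw [mem_sphere_iff_norm] at hζ
    exact hζ.trans_ne (abs_ne_zero.2 hR)
  simp [poissonKernel_def, this]

theorem circleAverage_poissonKernel_mul_const (hw : w ∈ ball c R) (a : ℝ) :
    circleAverage (fun ζ => poissonKernel c w ζ * a) c R = a := by
  have h := (diffContOnCl_const (c := (a : ℂ))).circleAverage_poissonKernel_smul hw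
  have hint : CircleIntegrable (fun ζ => poissonKernel c w ζ * a) c R :=
    ((continuousOn_poissonKernel_sphere hw).mul continuousOn_const).circleIntegrable'
  apply ofReal_injective
  rw [← h, ← ofRealCLM_apply, ← ofRealCLM.circleAverage_comp_comm hint]
  congr 1
  ext ζ
  simp

theorem poissonKernel_le_of_le_norm_sub (hw : w ∈ ball c R) {ζ : ℂ} (hζ : ζ ∈ sphere c R) {d : ℝ}
    (hd : 0 < d) (hdζ : d ≤ ‖ζ - w‖) :
    poissonKernel c w ζ ≤ (R ^ 2 - ‖w - c‖ ^ 2) / d ^ 2 := by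
  have hA := sq_norm_sub_le_sq_of_mem_ball hw
  rw [poissonKernel_def, mem_sphere_iff_norm.1 hζ, sub_sub_sub_cancel_right]
  gcongr

theorem abs_poissonIntegral_sub_le (hR : 0 < R) (hu : ContinuousOn u (sphere c R))
    (hw : w ∈ ball c R) {a η B : ℝ}
    (hbound : ∀ ζ ∈ sphere c R, poissonKernel c w ζ * |u ζ - a| ≤ poissonKernel c w ζ * η + B) :
    |poissonIntegral u c R w - a| ≤ η + B := by
  have hK := continuousOn_poissonKernel_sphere hw
  have hu' : ContinuousOn u (sphere c |R|) := by rwa [abs_of_pos hR]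
  have hmass := circleAverage_poissonKernel_mul_const hw
  have hKu : CircleIntegrable (fun ζ => poissonKernel c w ζ * u ζ) c R :=
    (hK.mul hu').circleIntegrable'
  have hKa (b : ℝ) : CircleIntegrable (fun ζ => poissonKernel c w ζ * b) c R :=
    (hK.mul continuousOn_const).circleIntegrable'
  calc |poissonIntegral u c R w - a|
      = |circleAverage (fun ζ => poissonKernel c w ζ * (u ζ - a)) c R| := by
        simp_rw [mul_sub]
        rw [circleAverage_fun_sub hKu (hKa _), hmass, poissonIntegral]
    _ ≤ circleAverage (fun ζ => |poissonKernel c w ζ * (u ζ - a)|) c R :=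
        abs_circleAverage_le_circleAverage_abs
    _ ≤ circleAverage (fun ζ => poissonKernel c w ζ * η + B) c R := by
        refine circleAverage_mono (hK.mul (hu'.sub continuousOn_const)).abs.circleIntegrable'
          ((hK.mul continuousOn_const).add continuousOn_const).circleIntegrable' fun ζ hζ => ?_
        rw [abs_of_pos hR] at hζ
        rw [abs_mul, abs_of_nonneg (poissonKernel_nonneg hw hζ)]
        exact hbound ζ hζ
    _ = η + B := by
        rw [circleAverage_fun_add (hKa _) continuousOn_const.circleIntegrable', hmass,
          circleAverage_const]

/-- Off the `δ`-neighbourhood of `ξ` the kernel is at most `(R² - ‖w - c‖²) / (δ / 2)²`, which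
tends to `0` as `w → ξ`; near `ξ` the data are close to `u ξ`, and the kernel has mass one. -/
theorem tendsto_poissonIntegral (hR : 0 < R) (hu : ContinuousOn u (sphere c R)) {ξ : ℂ}
    (hξ : ξ ∈ sphere c R) :
    Tendsto (poissonIntegral u c R) (𝓝[ball c R] ξ) (𝓝 (u ξ)) := by
  obtain ⟨C, hC⟩ := (isCompact_sphere c R).exists_bound_of_continuousOn hu
  have hC0 : 0 ≤ C := (norm_nonneg _).trans (hC ξ hξ)
  rw [Metric.tendsto_nhds]
  intro ε hε
  obtain ⟨δ, hδ, hδu⟩ := Metric.continuousWithinAt_iff.1 (hu ξ hξ) (ε / 2) (half_pos hε)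
  set B : ℂ → ℝ := fun w => (R ^ 2 - ‖w - c‖ ^ 2) / (δ / 2) ^ 2 * (2 * C)
  have hB : Tendsto B (𝓝 ξ) (𝓝 0) := by
    have h : Tendsto B (𝓝 ξ) (𝓝 (B ξ)) := (by fun_prop : Continuous B).tendsto ξ
    rwa [show B ξ = 0 by simp [B, mem_sphere_iff_norm.1 hξ]] at h
  filter_upwards [self_mem_nhdsWithin,
    nhdsWithin_le_nhds (hB.eventually (gt_mem_nhds (half_pos hε))),
    nhdsWithin_le_nhds (ball_mem_nhds ξ (half_pos hδ))] with w hw hwB (hwξ : dist w ξ < δ / 2)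
  have hA := sq_norm_sub_le_sq_of_mem_ball hw
  have hBw : 0 ≤ B w := mul_nonneg (div_nonneg (sub_nonneg.2 hA) (by positivity)) (by positivity)
  have hbound : ∀ ζ ∈ sphere c R,
      poissonKernel c w ζ * |u ζ - u ξ| ≤ poissonKernel c w ζ * (ε / 2) + B w := by
    intro ζ hζ
    have hKζ := poissonKernel_nonneg hw hζ
    by_cases hζξ : dist ζ ξ < δ
    · have hclose : |u ζ - u ξ| ≤ ε / 2 := (hδu hζ hζξ).le
      nlinarith
    · have hfar : δ / 2 ≤ ‖ζ - w‖ := by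
        rw [← dist_eq_norm]
        linarith [dist_triangle ζ w ξ]
      have hdiff : |u ζ - u ξ| ≤ 2 * C := by
        have h1 := hC ζ hζ
        have h2 := hC ξ hξ
        rw [Real.norm_eq_abs] at h1 h2
        linarith [abs_sub (u ζ) (u ξ)]
      have := mul_le_mul (poissonKernel_le_of_le_norm_sub hw hζ (half_pos hδ) hfar) hdiff
        (abs_nonneg _) (div_nonneg (sub_nonneg.2 hA) (by positivity))
      nlinarith
  rw [Real.dist_eq]
  linarith [abs_poissonIntegral_sub_le hR hu hw hbound]

end PoissonIntegral

section MeanValue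

variable {u : ℂ → ℝ} {c : ℂ} {R : ℝ}

theorem HasLocalMeanValueOn.eqOn_poissonIntegral (hR : 0 < R)
    (hu : ContinuousOn u (closedBall c R)) (hmv : HasLocalMeanValueOn u (ball c R)) :
    EqOn u (poissonIntegral u c R) (ball c R) := by
  classical
  have husph : ContinuousOn u (sphere c R) := hu.mono sphere_subset_closedBall
  set H := (ball c R).piecewise (poissonIntegral u c R) u
  have hHsph : ∀ ζ ∈ sphere c R, H ζ = u ζ := fun ζ hζ =>
    piecewise_eq_of_notMem _ _ _ (by simp [mem_sphere.1 hζ])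
  have hH : ContinuousOn H (closedBall c R) := by
    have hball : closedBall c R ∩ ball c R = ball c R := inter_eq_right.2 ball_subset_closedBall
    refine ContinuousOn.piecewise' (fun ζ hζ => ?_) (fun ζ hζ => ?_) ?_
      (hu.mono inter_subset_left)
    · rw [frontier_ball c hR.ne'] at hζ
      show Tendsto _ _ (𝓝 (H ζ))
      rw [hball, hHsph ζ hζ.2]
      exact tendsto_poissonIntegral hR husph hζ.2
    · rw [frontier_ball c hR.ne'] at hζ
      show Tendsto _ _ (𝓝 (H ζ))
      rw [hHsph ζ hζ.2]
      exact (hu ζ hζ.1).mono inter_subset_left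
    · rw [hball]
      exact continuousOn_poissonIntegral hR husph
  have hHmv : HasLocalMeanValueOn H (ball c R) := fun z hz => by
    filter_upwards [eventually_nhdsGT_zero_closedBall_subset (isOpen_ball.mem_nhds hz),
      self_mem_nhdsWithin] with r hr (hr0 : 0 < r)
    rw [show H z = poissonIntegral u c R z from piecewise_eq_of_mem _ _ _ hz,
      ← circleAverage_poissonIntegral hR husph hr0 hr]
    refine circleAverage_congr_sphere fun ζ hζ => piecewise_eq_of_mem _ _ _ (hr ?_)
    rw [abs_of_pos hr0] at hζ
    exact sphere_subset_closedBall hζ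
  exact fun z hz => (piecewise_eq_of_mem (ball c R) (poissonIntegral u c R) u hz) ▸
    hmv.eqOn_of_eqOn_sphere hHmv hu hH (fun ζ hζ => (hHsph ζ hζ).symm) (ball_subset_closedBall hz)

theorem HasLocalMeanValueOn.circleAverage_eq (hR : 0 < R) (hu : ContinuousOn u (closedBall c R))
    (hmv : HasLocalMeanValueOn u (ball c R)) : circleAverage u c R = u c := by
  rw [hmv.eqOn_poissonIntegral hR hu (mem_ball_self hR), poissonIntegral_center hR.ne']

theorem re_I_mul_two_mul_div_sq {ζ : ℂ} (hζ : ‖ζ‖ = R) (hR : R ≠ 0) (a : ℝ) :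
    (I * ((2 * ζ / ζ ^ 2) * a)).re = 2 / R ^ 2 * (ζ.im * a) := by
  have hζ0 : ζ ≠ 0 := by
    rintro rfl
    exact hR (by simpa using hζ.symm)
  have hn : normSq ζ = R ^ 2 := by rw [normSq_eq_norm_sq, hζ]
  rw [show 2 * ζ / ζ ^ 2 = 2 * ζ⁻¹ by field_simp, inv_def, hn]
  simp [-ofReal_inv, -ofReal_pow, mul_re, mul_im]
  ring

theorem HasLocalMeanValueOn.hasDerivAt_vertical (hR : 0 < R)
    (hu : ContinuousOn u (closedBall c R)) (hmv : HasLocalMeanValueOn u (ball c R)) :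
    HasDerivAt (fun y : ℝ => u (c + y * I))
      (2 / R ^ 2 * circleAverage (fun ζ => (ζ - c).im * u ζ) c R) 0 := by
  have husph : ContinuousOn u (sphere c R) := hu.mono sphere_subset_closedBall
  have hg := hasDerivAt_herglotzIntegral hR husph (mem_ball_self hR)
  have hline : HasDerivAt (fun y : ℝ => c + y * I) I 0 := by
    simpa using ((hasDerivAt_id (0 : ℝ)).ofReal_comp.mul_const I).const_add c
  have hre := reCLM.hasFDerivAt.comp_hasDerivAt (0 : ℝ)
    (HasDerivAt.comp (0 : ℝ) (by simpa using hg) hline)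
  have hnear : ∀ᶠ y : ℝ in 𝓝 0, c + y * I ∈ ball c R :=
    (hline.continuousAt.preimage_mem_nhds (by simpa using isOpen_ball.mem_nhds (mem_ball_self hR)))
  refine (hre.congr_of_eventuallyEq ?_).congr_deriv ?_
  · filter_upwards [hnear] with y hy
    simp [re_herglotzIntegral hR husph hy, hmv.eqOn_poissonIntegral hR hu hy]
  · have hF : ContinuousOn (fun ζ => I * (2 * ζ / ζ ^ 2 * (u (ζ + c) : ℂ))) (sphere 0 R) := by
      refine continuousOn_const.mul (((continuousOn_const.mul continuousOn_id).div
        (continuousOn_id.pow 2) fun ζ hζ => ?_).mul husph.ofReal_comp_add_sphere_zero)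
      exact pow_ne_zero 2 (ne_of_mem_sphere hζ hR.ne')
    rw [mul_comm, ← smul_eq_mul, ← circleAverage_fun_smul,
      ← reCLM.circleAverage_comp_comm (f := fun ζ => I • (2 * ζ / ζ ^ 2 * (u (ζ + c) : ℂ)))
        (hF.circleIntegrable hR.le), ← smul_eq_mul,
      ← circleAverage_fun_smul, ← circleAverage_map_add_const (c := c)]
    refine circleAverage_congr_sphere fun ζ hζ => ?_
    rw [abs_of_pos hR, mem_sphere_zero_iff_norm] at hζ
    simpa using re_I_mul_two_mul_div_sq hζ hR.ne' (u (ζ + c))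

end MeanValue

-- The mean value in `HarmonicOnSet` is `circleAverage u z ρ` unfolded, so the two agree by `rfl`.
theorem harmonicOnSet_of_hasLocalMeanValueOn {u : ℂ → ℝ} {s : Set ℂ} (hc : ContinuousOn u s)
    (hmv : HasLocalMeanValueOn u s) : HarmonicOnSet u s :=
  ⟨hc, fun _ _ _ hρ hsub =>
    ((hmv.mono (ball_subset_closedBall.trans hsub)).circleAverage_eq hρ (hc.mono hsub)).symm⟩

theorem isOpen_UHP : IsOpen UHP :=
  isOpen_lt continuous_const continuous_im

section OddReflection

variable {v : ℂ → ℝ} {z : ℂ}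

theorem oddReflection_of_im_pos (hz : 0 < z.im) : oddReflection v z = v z :=
  if_pos hz

theorem oddReflection_of_im_eq_zero (hz : z.im = 0) : oddReflection v z = 0 := by
  simp [oddReflection, hz]

theorem oddReflection_conj (v : ℂ → ℝ) (z : ℂ) :
    oddReflection v (conj' z) = -oddReflection v z := by
  rcases lt_trichotomy z.im 0 with hz | hz | hz
  · simp [oddReflection, hz, hz.not_gt]
  · simp [oddReflection, hz]
  · simp [oddReflection, hz, hz.not_gt]

theorem circleAverage_oddReflection_conj (v : ℂ → ℝ) (z : ℂ) (R : ℝ) :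
    circleAverage (oddReflection v) (conj' z) R = -circleAverage (oddReflection v) z R := by
  rw [← circleAverage_comp_conj]
  simp only [oddReflection_conj, circleAverage_def, intervalIntegral.integral_neg, smul_neg]

theorem hasLocalMeanValueOn_oddReflection (hv : HarmonicOnSet v UHP) :
    HasLocalMeanValueOn (oddReflection v) univ := by
  have hupper (z : ℂ) (hz : 0 < z.im) :
      ∀ᶠ r in 𝓝[>] (0 : ℝ), circleAverage (oddReflection v) z r = oddReflection v z := by
    filter_upwards [eventually_nhdsGT_zero_closedBall_subset (isOpen_UHP.mem_nhds hz),
      self_mem_nhdsWithin] with r hr (hr0 : 0 < r)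
    have hmean : circleAverage v z r = v z := (hv.2 z hz r hr0 hr).symm
    rw [oddReflection_of_im_pos hz, ← hmean]
    refine circleAverage_congr_sphere fun ζ hζ => oddReflection_of_im_pos (hr ?_)
    rw [abs_of_pos hr0] at hζ
    exact sphere_subset_closedBall hζ
  intro z _
  rcases lt_trichotomy z.im 0 with hz | hz | hz
  · filter_upwards [hupper (conj' z) (by simpa using hz)] with r hr
    rwa [circleAverage_oddReflection_conj, oddReflection_conj, neg_inj] at hr
  · filter_upwards with r
    have h := circleAverage_oddReflection_conj v z r
    rw [conj_eq_iff_im.2 hz] at h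
    rw [oddReflection_of_im_eq_zero hz]
    linarith
  · exact hupper z hz

theorem continuousAt_oddReflection_of_im_pos (hv : ContinuousOn v UHP) (hz : 0 < z.im) :
    ContinuousAt (oddReflection v) z :=
  (hv.continuousAt (isOpen_UHP.mem_nhds hz)).congr <|
    (isOpen_UHP.eventually_mem hz).mono fun _ hζ => (oddReflection_of_im_pos hζ).symm

theorem continuousAt_oddReflection_of_im_neg (hv : ContinuousOn v UHP) (hz : z.im < 0) :
    ContinuousAt (oddReflection v) z := by
  have h : oddReflection v = fun ζ => -oddReflection v (conj' ζ) :=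
    funext fun ζ => by rw [oddReflection_conj, neg_neg]
  rw [h]
  exact ((continuousAt_oddReflection_of_im_pos hv (by simpa using hz)).comp
    continuous_conj.continuousAt).neg

theorem continuousAt_oddReflection_of_im_eq_zero (hz : z.im = 0)
    (hlim : Tendsto v (𝓝[UHP] z) (𝓝 0)) : ContinuousAt (oddReflection v) z := by
  have hU : Tendsto (oddReflection v) (𝓝[UHP] z) (𝓝 0) :=
    hlim.congr' (eventually_nhdsWithin_of_forall fun _ hζ => (oddReflection_of_im_pos hζ).symm)
  have hA : Tendsto (oddReflection v) (𝓝[{ζ | ζ.im = 0}] z) (𝓝 0) :=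
    tendsto_const_nhds.congr'
      (eventually_nhdsWithin_of_forall fun _ hζ => (oddReflection_of_im_eq_zero hζ).symm)
  have hL : Tendsto (oddReflection v) (𝓝[LHP] z) (𝓝 0) := by
    have hconj : Tendsto conj' (𝓝[LHP] z) (𝓝[UHP] z) := by
      have := continuous_conj.continuousWithinAt.tendsto_nhdsWithin
        (x := z) (s := LHP) (t := UHP)
        fun ζ (hζ : ζ.im < 0) => show 0 < (conj' ζ).im by simpa using hζ
      rwa [conj_eq_iff_im.2 hz] at this
    simpa [Function.comp_def, oddReflection_conj] using (hU.comp hconj).neg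
  have huniv : UHP ∪ {ζ | ζ.im = 0} ∪ LHP = univ := by
    ext ζ
    simp only [UHP, LHP, mem_union, mem_ofPred_eq, mem_univ, iff_true]
    rcases lt_trichotomy ζ.im 0 with h | h | h <;> simp [h]
  rw [ContinuousAt, oddReflection_of_im_eq_zero hz, ← nhdsWithin_univ, ← huniv,
    nhdsWithin_union, nhdsWithin_union]
  exact (hU.sup hA).sup hL

theorem continuousOn_oddReflection {a b : ℝ} (hv : ContinuousOn v UHP)
    (hbdry : ∀ x ∈ Ioo a b, Tendsto v (𝓝[UHP] (x : ℂ)) (𝓝 0)) :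
    ContinuousOn (oddReflection v) (UHP ∪ {z : ℂ | z.im = 0 ∧ z.re ∈ Ioo a b} ∪ LHP) := by
  rintro z ((hz | ⟨hz, hre⟩) | hz)
  · exact (continuousAt_oddReflection_of_im_pos hv hz).continuousWithinAt
  · have hzre : (z.re : ℂ) = z := Complex.ext rfl (by simp [hz])
    exact (continuousAt_oddReflection_of_im_eq_zero hz (hzre ▸ hbdry z.re hre)).continuousWithinAt
  · exact (continuousAt_oddReflection_of_im_neg hv hz).continuousWithinAt

theorem im_mul_oddReflection_nonneg (hpos : ∀ z ∈ UHP, 0 < v z) (z : ℂ) :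
    0 ≤ z.im * oddReflection v z := by
  rcases lt_trichotomy z.im 0 with hz | hz | hz
  · have h := hpos (conj' z) (by simpa [UHP] using hz)
    rw [← neg_neg (oddReflection v z), ← oddReflection_conj,
      oddReflection_of_im_pos (by simpa using hz)]
    nlinarith
  · simp [hz]
  · rw [oddReflection_of_im_pos hz]
    exact (mul_pos hz (hpos z hz)).le

theorem circleAverage_im_sub_mul_oddReflection_pos (hpos : ∀ z ∈ UHP, 0 < v z) {c : ℂ}
    (hc : c.im = 0) {R : ℝ} (hR : 0 < R) (hcont : ContinuousOn (oddReflection v) (sphere c R)) :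
    0 < circleAverage (fun ζ => (ζ - c).im * oddReflection v ζ) c R := by
  have him (ζ : ℂ) : (ζ - c).im = ζ.im := by simp [hc]
  have htop : (c + R * I).im = R := by simp [hc]
  have hmem : c + R * I ∈ sphere c R := by simp [abs_of_pos hR]
  rw [← circleAverage_const (0 : ℝ) c R]
  refine circleAverage_lt_circleAverage hR continuousOn_const
    ((by fun_prop : Continuous fun ζ : ℂ => (ζ - c).im).continuousOn.mul hcont)
    (fun ζ _ => by simpa only [him] using im_mul_oddReflection_nonneg hpos ζ) ⟨c + R * I, hmem, ?_⟩
  rw [him, htop, oddReflection_of_im_pos (by rwa [htop])]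
  exact mul_pos hR (hpos _ (by simpa [UHP, htop] using hR))

end OddReflection

theorem stmt_9_general (v : ℂ → ℝ) (a b : ℝ)
    (hv : HarmonicOnSet v UHP)
    (hpos : ∀ z ∈ UHP, 0 < v z)
    (hbdry : ∀ x ∈ Set.Ioo a b, Tendsto v (nhdsWithin (x : ℂ) UHP) (nhds 0)) :
    HarmonicOnSet (oddReflection v)
      (UHP ∪ {z : ℂ | z.im = 0 ∧ z.re ∈ Set.Ioo a b} ∪ LHP) ∧
    ∀ x ∈ Set.Ioo a b, ∃ d : ℝ, 0 < d ∧
      HasDerivAt (fun y : ℝ => oddReflection v ((x : ℂ) + (y : ℂ) * Complex.I)) d 0 := by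
  set Ω := UHP ∪ {z : ℂ | z.im = 0 ∧ z.re ∈ Set.Ioo a b} ∪ LHP
  have hcont : ContinuousOn (oddReflection v) Ω := continuousOn_oddReflection hv.1 hbdry
  have hmv : HasLocalMeanValueOn (oddReflection v) Ω :=
    (hasLocalMeanValueOn_oddReflection hv).mono (subset_univ Ω)
  refine ⟨harmonicOnSet_of_hasLocalMeanValueOn hcont hmv, fun x hx => ?_⟩
  have hstrip : re ⁻¹' Ioo a b ⊆ Ω := fun ζ hζ => by
    rcases lt_trichotomy ζ.im 0 with h | h | h
    exacts [Or.inr h, Or.inl (Or.inr ⟨h, hζ⟩), Or.inl (Or.inl h)]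
  have hx' : (x : ℂ).re ∈ Ioo a b := by simpa using hx
  obtain ⟨R, hR, hsub⟩ := nhds_basis_closedBall.mem_iff.1 <|
    mem_of_superset ((isOpen_Ioo.preimage continuous_re).mem_nhds hx') hstrip
  have hcR := hcont.mono hsub
  exact ⟨_, mul_pos (by positivity) (circleAverage_im_sub_mul_oddReflection_pos hpos (ofReal_im x)
    hR (hcR.mono sphere_subset_closedBall)),
    (hmv.mono (ball_subset_closedBall.trans hsub)).hasDerivAt_vertical hR hcR⟩

/-- If `v > 0` is harmonic on `ℍ` and extends continuously by `0` to the interval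
`(a,b) ⊆ ℝ`, then the odd reflection `v*` is harmonic across `(a,b)` and its
normal derivative on `(a,b)` exists and is strictly positive. -/
theorem stmt_9 (v : ℂ → ℝ) (a b : ℝ) (hab : a < b)
    (hv : HarmonicOnSet v UHP)
    (hpos : ∀ z ∈ UHP, 0 < v z)
    (hbdry : ∀ x ∈ Set.Ioo a b, Tendsto v (nhdsWithin (x : ℂ) UHP) (nhds 0)) :
    HarmonicOnSet (oddReflection v)
      (UHP ∪ {z : ℂ | z.im = 0 ∧ z.re ∈ Set.Ioo a b} ∪ LHP) ∧
    ∀ x ∈ Set.Ioo a b, ∃ d : ℝ, 0 < d ∧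
      HasDerivAt (fun y : ℝ => oddReflection v ((x : ℂ) + (y : ℂ) * Complex.I)) d 0 :=
  stmt_9_general v a b hv hpos hbdry
end

section
/- Let T be holomorphic on a neighborhood of the closed disk {|z| ≤ η}, with T(0) = 0, T'(0) = 0, T''(0) ≠ 0 (a zero of order exactly 2 at 0), and T injective on the closed upper half-disk K_η = {|z| ≤ η, Im z ≥ 0}. Define Ω = T({|z| < η, Im z > 0}) and Γ = T((-η, η)). Then the function S = A ∘ T⁻¹, where A(z) = conj(T(conj(z))), is well defined on Ω ∪ Γ, holomorphic on Ω, continuous on Ω ∪ Γ, and satisfies S(ζ) = conj(ζ) for all ζ ∈ Γ; that is, S is a Schwarz function on the cusp domain Ω ∪ Γ. -/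
open Complex Metric Set

local notation "conj'" => starRingEnd ℂ

/-! The inverse `T⁻¹ = invFunOn T K` is continuous on `T(K)` because `K` is compact; hence `S` is
continuous on `Ω ∪ Γ`, and on `Γ` it returns real points `x`, where `S (T x) = conj (T x)`.
Holomorphy on `Ω` rests on the fact that an injective holomorphic map has nonvanishing
derivative: if `T'(z₀) = 0`, then near `z₀` we can write `T - T(z₀) = φⁿ` with `n ≥ 2` and `φ` an
open map at `z₀`, and `y ↦ yⁿ` is not injective near `0` since `(ω y)ⁿ = yⁿ` for a primitive
`n`-th root of unity `ω`. So near `T(z₀)` the inverse `T⁻¹` is the holomorphic local inverse of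
`T`. -/

open Filter Function Topology

theorem Filter.Eventually.exists_ne_of_nhds {X : Type*} [TopologicalSpace X] {x : X}
    [(𝓝[≠] x).NeBot] {p : X → Prop} (h : ∀ᶠ y in 𝓝 x, p y) : ∃ y ≠ x, p y :=
  ((h.filter_mono nhdsWithin_le_nhds).and (self_mem_nhdsWithin (s := {x}ᶜ))).exists.imp
    fun _ h => ⟨h.2, h.1⟩

theorem not_injOn_pow_of_mem_nhds_zero {n : ℕ} (hn : 2 ≤ n) {s : Set ℂ} (hs : s ∈ 𝓝 0) :
    ¬ InjOn (· ^ n) s := by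
  intro hinj
  obtain ⟨ω, hω⟩ : ∃ ω : ℂ, IsPrimitiveRoot ω n := ⟨_, isPrimitiveRoot_exp n (by omega)⟩
  have hωs : ∀ᶠ y in 𝓝 (0 : ℂ), y ∈ s ∧ ω * y ∈ s :=
    Eventually.and hs ((continuous_const_mul ω).tendsto' 0 0 (mul_zero ω) hs)
  obtain ⟨y, hy0, hy, hωy⟩ := hωs.exists_ne_of_nhds
  have : ω * y = 1 * y := (hinj hωy hy (by simp [mul_pow, hω.pow_eq_one])).trans (one_mul y).symm
  exact hω.ne_one (by omega) (mul_right_cancel₀ hy0 this)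

theorem AnalyticAt.exists_eventually_pow_eq {h : ℂ → ℂ} {z₀ : ℂ} (hh : AnalyticAt ℂ h z₀)
    (hz₀ : h z₀ ≠ 0) {n : ℕ} (hn : n ≠ 0) :
    ∃ r : ℂ → ℂ, AnalyticAt ℂ r z₀ ∧ r z₀ ≠ 0 ∧ ∀ᶠ z in 𝓝 z₀, r z ^ n = h z := by
  obtain ⟨d, hd⟩ := IsAlgClosed.exists_pow_nat_eq (h z₀) (Nat.pos_of_ne_zero hn)
  refine ⟨fun z => d * (h z / h z₀) ^ (n⁻¹ : ℂ), ?_, ?_, .of_forall fun z => ?_⟩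
  · exact analyticAt_const.mul <| (hh.div analyticAt_const hz₀).cpow analyticAt_const
      (by simp [hz₀, one_mem_slitPlane])
  · have hd0 : d ≠ 0 := by rintro rfl; exact hz₀ (by simp [← hd, hn])
    simp [hz₀, hd0]
  · rw [mul_pow, cpow_nat_inv_pow _ hn, hd, mul_div_cancel₀ _ hz₀]

theorem AnalyticAt.exists_map_nhds_eq_pow_eq_sub {f : ℂ → ℂ} {z₀ : ℂ} (hf : AnalyticAt ℂ f z₀)
    (hconst : ¬ EventuallyConst f (𝓝 z₀)) (hd : deriv f z₀ = 0) :
    ∃ n, 2 ≤ n ∧ ∃ φ : ℂ → ℂ, map φ (𝓝 z₀) = 𝓝 0 ∧ ∀ᶠ z in 𝓝 z₀, φ z ^ n = f z - f z₀ := by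
  have hg : AnalyticAt ℂ (f · - f z₀) z₀ := hf.sub analyticAt_const
  obtain ⟨n, hn⟩ := ENat.ne_top_iff_exists.mp
    (mt eventuallyConst_iff_analyticOrderAt_sub_eq_top.mpr hconst)
  have hn2 : 2 ≤ n := by
    have : ((2 : ℕ) : ℕ∞) ≤ analyticOrderAt (f · - f z₀) z₀ := by
      rw [natCast_le_analyticOrderAt_iff_iteratedDeriv_eq_zero hg]
      intro i hi
      interval_cases i
      · simp
      · simp [iteratedDeriv_one, hd]
    exact_mod_cast hn ▸ this
  obtain ⟨h, hh, hz₀, hfh⟩ := hg.analyticOrderAt_eq_natCast.mp hn.symm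
  obtain ⟨r, hr, hr₀, hrh⟩ := hh.exists_eventually_pow_eq hz₀ (by positivity)
  refine ⟨n, hn2, fun z => (z - z₀) * r z, ?_, ?_⟩
  · have hφ : HasStrictDerivAt (fun z => (z - z₀) * r z) (r z₀) z₀ := by
      simpa using ((hasStrictDerivAt_id z₀).fun_sub (hasStrictDerivAt_const z₀ z₀)).fun_mul
        hr.hasStrictDerivAt
    simpa using hφ.map_nhds_eq hr₀
  · filter_upwards [hfh, hrh] with z hfz hrz
    rw [hfz, mul_pow, hrz, smul_eq_mul]

theorem AnalyticAt.deriv_ne_zero_of_injOn {f : ℂ → ℂ} {z₀ : ℂ} {s : Set ℂ}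
    (hf : AnalyticAt ℂ f z₀) (hs : s ∈ 𝓝 z₀) (hinj : InjOn f s) : deriv f z₀ ≠ 0 := by
  intro hd
  have hconst : ¬ EventuallyConst f (𝓝 z₀) := by
    intro hc
    obtain ⟨c, hc⟩ := eventuallyConst_iff_exists_eventuallyEq.mp hc
    obtain ⟨z, hz, hzs, hfz⟩ := (Eventually.and hs hc).exists_ne_of_nhds
    exact hz (hinj hzs (mem_of_mem_nhds hs) (hfz.trans hc.self_of_nhds.symm))
  obtain ⟨n, hn, φ, hφ, hφf⟩ := hf.exists_map_nhds_eq_pow_eq_sub hconst hd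
  refine not_injOn_pow_of_mem_nhds_zero hn (hφ ▸ image_mem_map (inter_mem hs hφf)) ?_
  rintro _ ⟨a, ⟨has, ha : φ a ^ n = _⟩, rfl⟩ _ ⟨b, ⟨hbs, hb : φ b ^ n = _⟩, rfl⟩
    (hab : φ a ^ n = φ b ^ n)
  rw [ha, hb, sub_left_inj] at hab
  rw [hinj has hbs hab]

theorem IsCompact.continuousOn_invFunOn {X Y : Type*} [TopologicalSpace X] [Nonempty X]
    [TopologicalSpace Y] [T2Space Y] {f : X → Y} {K : Set X} (hK : IsCompact K)
    (hf : ContinuousOn f K) (hinj : InjOn f K) : ContinuousOn (invFunOn f K) (f '' K) := by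
  rw [continuousOn_iff_isClosed]
  intro C hC
  refine ⟨f '' (K ∩ C),
    ((hK.inter_right hC).image_of_continuousOn (hf.mono inter_subset_left)).isClosed, ?_⟩
  ext ζ
  constructor
  · rintro ⟨hζC, z, hz, rfl⟩
    rw [mem_preimage, hinj.leftInvOn_invFunOn hz] at hζC
    exact ⟨⟨z, ⟨hz, hζC⟩, rfl⟩, z, hz, rfl⟩
  · rintro ⟨⟨z, ⟨hz, hzC⟩, rfl⟩, hζ⟩
    exact ⟨by rwa [mem_preimage, hinj.leftInvOn_invFunOn hz], hζ⟩

theorem Set.InjOn.differentiableAt_invFunOn {f : ℂ → ℂ} {s : Set ℂ} {z : ℂ} (hinj : InjOn f s)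
    (hs : s ∈ 𝓝 z) (hf : AnalyticAt ℂ f z) : DifferentiableAt ℂ (invFunOn f s) (f z) := by
  have hf' := hf.deriv_ne_zero_of_injOn hs hinj
  have hψ := hf.hasStrictDerivAt.to_localInverse hf'
  have hψz := (hf.hasStrictDerivAt.eventually_left_inverse hf').self_of_nhds
  refine hψ.hasDerivAt.differentiableAt.congr_of_eventuallyEq ?_
  filter_upwards [hf.hasStrictDerivAt.eventually_right_inverse hf',
    hψ.hasDerivAt.continuousAt.preimage_mem_nhds (hψz.symm ▸ hs)] with ζ hfψ hψs
  conv_lhs => rw [← hfψ]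
  exact hinj.leftInvOn_invFunOn hψs

theorem stmt_17_general (η : ℝ) (T : ℂ → ℂ) (U : Set ℂ) (hUopen : IsOpen U)
    (hUsub : Metric.closedBall (0 : ℂ) η ⊆ U)
    (hThol : DifferentiableOn ℂ T U)
    (hTinj : Set.InjOn T {z : ℂ | ‖z‖ ≤ η ∧ 0 ≤ z.im}) :
    DifferentiableOn ℂ
      (fun ζ => conj' (T (conj' (Function.invFunOn T {z : ℂ | ‖z‖ ≤ η ∧ 0 ≤ z.im} ζ))))
      (T '' {z : ℂ | ‖z‖ < η ∧ 0 < z.im}) ∧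
    ContinuousOn
      (fun ζ => conj' (T (conj' (Function.invFunOn T {z : ℂ | ‖z‖ ≤ η ∧ 0 ≤ z.im} ζ))))
      (T '' {z : ℂ | ‖z‖ < η ∧ 0 < z.im} ∪ (fun x : ℝ => T (x : ℂ)) '' Set.Ioo (-η) η) ∧
    ∀ ζ ∈ (fun x : ℝ => T (x : ℂ)) '' Set.Ioo (-η) η,
      conj' (T (conj' (Function.invFunOn T {z : ℂ | ‖z‖ ≤ η ∧ 0 ≤ z.im} ζ))) = conj' ζ := by
  set K : Set ℂ := {z : ℂ | ‖z‖ ≤ η ∧ 0 ≤ z.im}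
  set D : Set ℂ := {z : ℂ | ‖z‖ < η ∧ 0 < z.im}
  have hKU : K ⊆ U := fun z hz => hUsub (by simpa using hz.1)
  have hKU' : MapsTo conj' K U := fun z hz => hUsub (by simpa using hz.1)
  have hK : IsCompact K := by
    convert (isCompact_closedBall (0 : ℂ) η).inter_right
      (isClosed_le continuous_const continuous_im : IsClosed {z : ℂ | 0 ≤ z.im}) using 1
    ext; simp [K]
  have hDK : ∀ z ∈ D, K ∈ 𝓝 z := fun z hz => mem_of_superset
    (((isOpen_lt continuous_norm continuous_const).inter
      (isOpen_lt continuous_const continuous_im)).mem_nhds hz) fun w hw => ⟨hw.1.le, hw.2.le⟩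
  have hΓK : ∀ x ∈ Ioo (-η) η, (x : ℂ) ∈ K := fun x hx =>
    ⟨by simpa [abs_le] using ⟨hx.1.le, hx.2.le⟩, by simp⟩
  refine ⟨?_, ?_, ?_⟩
  · rintro _ ⟨z, hz, rfl⟩
    have hzK : z ∈ K := mem_of_mem_nhds (hDK z hz)
    have hA : DifferentiableAt ℂ (fun w => conj' (T (conj' w))) z :=
      differentiableAt_conj_conj_iff.mpr (hThol.differentiableAt (hUopen.mem_nhds (hKU' hzK)))
    have hg := hTinj.differentiableAt_invFunOn (hDK z hz)
      (hThol.analyticAt (hUopen.mem_nhds (hKU hzK)))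
    rw [← hTinj.leftInvOn_invFunOn hzK] at hA
    exact (hA.comp (T z) hg).differentiableWithinAt
  · have hg := hK.continuousOn_invFunOn (hThol.continuousOn.mono hKU) hTinj
    have hA : ContinuousOn (fun w => conj' (T (conj' w))) K :=
      continuous_conj.comp_continuousOn (hThol.continuousOn.comp continuous_conj.continuousOn hKU')
    refine (hA.comp hg (surjOn_image T K).mapsTo_invFunOn).mono (union_subset ?_ ?_)
    · exact image_mono fun z hz => mem_of_mem_nhds (hDK z hz)
    · rintro _ ⟨x, hx, rfl⟩
      exact mem_image_of_mem T (hΓK x hx)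
  · rintro _ ⟨x, hx, rfl⟩
    simp [hTinj.leftInvOn_invFunOn (hΓK x hx)]

/-- Schwarz function on a cusp domain: if `T` is holomorphic near the closed disk
of radius `η`, has a zero of order exactly `2` at `0`, and is injective on the
closed upper half-disk, then `S = A ∘ T⁻¹` with `A(z) = conj(T(conj z))` is a
Schwarz function of `Ω = T({|z| < η, Im z > 0})` with boundary `Γ = T((-η,η))`. -/
theorem stmt_17 (η : ℝ) (hη : 0 < η) (T : ℂ → ℂ) (U : Set ℂ) (hUopen : IsOpen U)
    (hUsub : Metric.closedBall (0 : ℂ) η ⊆ U)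
    (hThol : DifferentiableOn ℂ T U)
    (hT0 : T 0 = 0) (hT1 : deriv T 0 = 0) (hT2 : iteratedDeriv 2 T 0 ≠ 0)
    (hTinj : Set.InjOn T {z : ℂ | ‖z‖ ≤ η ∧ 0 ≤ z.im}) :
    DifferentiableOn ℂ
      (fun ζ => conj' (T (conj' (Function.invFunOn T {z : ℂ | ‖z‖ ≤ η ∧ 0 ≤ z.im} ζ))))
      (T '' {z : ℂ | ‖z‖ < η ∧ 0 < z.im}) ∧
    ContinuousOn
      (fun ζ => conj' (T (conj' (Function.invFunOn T {z : ℂ | ‖z‖ ≤ η ∧ 0 ≤ z.im} ζ))))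
      (T '' {z : ℂ | ‖z‖ < η ∧ 0 < z.im} ∪ (fun x : ℝ => T (x : ℂ)) '' Set.Ioo (-η) η) ∧
    ∀ ζ ∈ (fun x : ℝ => T (x : ℂ)) '' Set.Ioo (-η) η,
      conj' (T (conj' (Function.invFunOn T {z : ℂ | ‖z‖ ≤ η ∧ 0 ≤ z.im} ζ))) = conj' ζ :=
  stmt_17_general η T U hUopen hUsub hThol hTinj
end
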